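/- Let A be an F-algebra with dim A = n > 2, let S be a generating set of A, and let (m_1, …, m_n) be the characteristic sequence of S. Then for every index h with m_h ≥ 2 there exist indices t_1, t_2 with 1 ≤ t_1 ≤ t_2 < h such that m_{t_1} > 0, m_{t_2} > 0 and m_h = m_{t_1} + m_{t_2}. -/
import Mathlib


namespace P

/-- The list of leaves (letters) of a nonassociative word, in order. -/
def leafList {α : Type*} : FreeMagma α → List α
  | .of a => [a]
  | .mul x y => leafList x ++ leafList y

/-- The length of a nonassociative word: the number of factors. -/
def wlen {α : Type*} (w : FreeMagma α) : ℕ := (leafList w).length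

/-- Evaluation of a formal word with letters in a magma `A`. -/
def evalA {A : Type*} [Mul A] (w : FreeMagma A) : A :=
  FreeMagma.lift (id : A → A) w

/-- Evaluation of a formal word in variables `Fin n` under an assignment `v`. -/
def evalVar {A : Type*} [Mul A] {n : ℕ} (v : Fin n → A) (w : FreeMagma (Fin n)) : A :=
  FreeMagma.lift v w

/-- `w` is a word in the set `S`: all its letters belong to `S`. -/
def HasLeavesIn {A : Type*} (S : Set A) (w : FreeMagma A) : Prop :=
  ∀ a ∈ leafList w, a ∈ S

/-- `L_i(S)`: the span of all values of words in `S` of length at most `i`.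
For `i = 0` this is `0`, since every word has length at least 1. -/
def Lspan (F : Type*) {A : Type*} [Field F] [NonUnitalNonAssocRing A] [Module F A]
    (S : Set A) (i : ℕ) : Submodule F A :=
  Submodule.span F { a | ∃ w : FreeMagma A, HasLeavesIn S w ∧ wlen w ≤ i ∧ evalA w = a }

/-- `S` is a generating set of the algebra `A`. -/
def Generates (F : Type*) {A : Type*} [Field F] [NonUnitalNonAssocRing A] [Module F A]
    (S : Set A) : Prop :=
  Submodule.span F { a | ∃ w : FreeMagma A, HasLeavesIn S w ∧ evalA w = a } = ⊤

/-- The length `l(S)` of a generating set: the least `k` with `L_k(S) = A`. -/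
noncomputable def lenS (F : Type*) {A : Type*} [Field F] [NonUnitalNonAssocRing A] [Module F A]
    (S : Set A) : ℕ :=
  sInf { k | Lspan F S k = ⊤ }

/-- The characteristic sequence of a generating set `S`, as a predicate on a
nondecreasing sequence `m : Fin d → ℕ`. -/
def IsCharSeq (F : Type*) {A : Type*} [Field F] [NonUnitalNonAssocRing A] [Module F A]
    (S : Set A) {d : ℕ} (m : Fin d → ℕ) : Prop :=
  Monotone m ∧ (∀ j, 1 ≤ m j) ∧
    ∀ t : ℕ, 1 ≤ t →
      (Finset.univ.filter fun j => m j = t).card =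
        Module.finrank F (Lspan F S t) - Module.finrank F (Lspan F S (t - 1))

/-- `w` is a multilinear word using each variable of `T` exactly once. -/
def IsMultilinearOn {n : ℕ} (T : Finset (Fin n)) (w : FreeMagma (Fin n)) : Prop :=
  (leafList w : Multiset (Fin n)) = T.val

/-- Membership in `D_0(z_0,…,z_k)`: multilinear words in `z_0,…,z_k` except those of
length `k+1` in which `z_0` is a factor of the last multiplication. -/
def InD0 {k : ℕ} (w : FreeMagma (Fin (k + 1))) : Prop :=
  (leafList w : Multiset (Fin (k + 1))).Nodup ∧
    ¬∃ u : FreeMagma (Fin (k + 1)),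
        IsMultilinearOn (Finset.univ.erase 0) u ∧
          (w = FreeMagma.of 0 * u ∨ w = u * FreeMagma.of 0)

/-- Membership in `D_l(z_0,…,z_k)`: multilinear words in `z_0,…,z_k` except those of
length `k+1` in which `z_0` occurs in the first factor of the last multiplication. -/
def InDl {k : ℕ} (w : FreeMagma (Fin (k + 1))) : Prop :=
  (leafList w : Multiset (Fin (k + 1))).Nodup ∧
    ¬((leafList w : Multiset (Fin (k + 1))) = (Finset.univ : Finset (Fin (k + 1))).val ∧
      ∃ w1 w2 : FreeMagma (Fin (k + 1)), w = w1 * w2 ∧ (0 : Fin (k + 1)) ∈ leafList w1)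

/-- Membership in `D_r(z_0,…,z_k)`: multilinear words in `z_0,…,z_k` except those of
length `k+1` in which `z_0` occurs in the second factor of the last multiplication. -/
def InDr {k : ℕ} (w : FreeMagma (Fin (k + 1))) : Prop :=
  (leafList w : Multiset (Fin (k + 1))).Nodup ∧
    ¬((leafList w : Multiset (Fin (k + 1))) = (Finset.univ : Finset (Fin (k + 1))).val ∧
      ∃ w1 w2 : FreeMagma (Fin (k + 1)), w = w1 * w2 ∧ (0 : Fin (k + 1)) ∈ leafList w2)

/-- The algebra `A` is `k`-mixing. -/
def IsKMixing (F A : Type*) [Field F] [NonUnitalNonAssocRing A] [Module F A] (k : ℕ) : Prop :=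
  ∀ (x : A) (y : Fin k → A) (w : FreeMagma (Fin (k + 1))),
    (∃ u, IsMultilinearOn (Finset.univ.erase 0) u ∧
        (w = FreeMagma.of 0 * u ∨ w = u * FreeMagma.of 0)) →
      evalVar (Fin.cons x y) w ∈
        Submodule.span F
          { a | ∃ z : FreeMagma (Fin (k + 1)), InD0 z ∧ evalVar (Fin.cons x y) z = a }

/-- The algebra `A` is `k`-sliding. -/
def IsKSliding (F A : Type*) [Field F] [NonUnitalNonAssocRing A] [Module F A] (k : ℕ) : Prop :=
  (∀ (x : A) (y : Fin k → A) (u : FreeMagma (Fin (k + 1))),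
      IsMultilinearOn (Finset.univ.erase 0) u →
        evalVar (Fin.cons x y) (u * FreeMagma.of 0) ∈
          Submodule.span F
            { a | ∃ z : FreeMagma (Fin (k + 1)), InDl z ∧ evalVar (Fin.cons x y) z = a }) ∨
  (∀ (x : A) (y : Fin k → A) (u : FreeMagma (Fin (k + 1))),
      IsMultilinearOn (Finset.univ.erase 0) u →
        evalVar (Fin.cons x y) (FreeMagma.of 0 * u) ∈
          Submodule.span F
            { a | ∃ z : FreeMagma (Fin (k + 1)), InDr z ∧ evalVar (Fin.cons x y) z = a })

/-- `u` is a subword of `w`. -/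
inductive IsSubword {A : Type*} : FreeMagma A → FreeMagma A → Prop
  | refl (w : FreeMagma A) : IsSubword w w
  | left {s u : FreeMagma A} (v : FreeMagma A) : IsSubword s u → IsSubword s (u * v)
  | right (u : FreeMagma A) {s v : FreeMagma A} : IsSubword s v → IsSubword s (u * v)

/-- `IsSprout w L`: `L` is a sprout sequence of the word `w` (with the convention that
words of length 1 have the empty sprout sequence). -/
inductive IsSprout {A : Type*} : FreeMagma A → List (FreeMagma A) → Prop
  | single (a : A) : IsSprout (FreeMagma.of a) []
  | cons_l {u v : FreeMagma A} {L : List (FreeMagma A)} :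
      wlen u ≤ wlen v → IsSprout v L → IsSprout (u * v) (u :: L)
  | cons_r {u v : FreeMagma A} {L : List (FreeMagma A)} :
      wlen v ≤ wlen u → IsSprout u L → IsSprout (u * v) (v :: L)

/-- A word is `k`-bounded if it has length 1 or admits an `l`-sprout sequence all of whose
terms are strictly less than `k`. -/
def KBounded {A : Type*} (k : ℕ) (w : FreeMagma A) : Prop :=
  ∃ L : List (FreeMagma A), IsSprout w L ∧ ∀ u ∈ L, wlen u < k

/-- A word `w` in `S` is irreducible if it does not lie in `L_m(S)` for any `m < l(w)`. -/
def Irred (F : Type*) {A : Type*} [Field F] [NonUnitalNonAssocRing A] [Module F A]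
    (S : Set A) (w : FreeMagma A) : Prop :=
  ∀ m : ℕ, m < wlen w → evalA w ∉ Lspan F S m

/-- The step function of a word: the least `t` such that `w` has a subword of
length `l(w) - 2t - 1`. -/
noncomputable def stepFn {A : Type*} (w : FreeMagma A) : ℕ :=
  sInf { t : ℕ | ∃ u : FreeMagma A, IsSubword u w ∧ wlen u + 2 * t + 1 = wlen w }

/-- `w` is a `p`-step word for the generating set `S`. -/
def IsPStepWord (F : Type*) {A : Type*} [Field F] [NonUnitalNonAssocRing A] [Module F A]
    (S : Set A) (w : FreeMagma A) (p : ℕ) : Prop :=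
  HasLeavesIn S w ∧ Irred F S w ∧ KBounded 3 w ∧ stepFn w = p ∧
    ∀ v : FreeMagma A, HasLeavesIn S v → Irred F S v → KBounded 3 v → wlen v = wlen w →
      p ≤ stepFn v

/-- `A` is `k`-round: `x · v = 0` for every product `v` of `k` elements. -/
def IsKRound (A : Type*) [NonUnitalNonAssocRing A] (k : ℕ) : Prop :=
  ∀ (x : A) (w : FreeMagma A), wlen w = k → x * evalA w = 0

/-- `A` is `k`-based. -/
def IsKBased (A : Type*) [NonUnitalNonAssocRing A] (k : ℕ) : Prop :=
  ∀ (x : A) (u v : FreeMagma A), wlen u + wlen v = k →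
    x * (evalA u * evalA v) = evalA u * (x * evalA v) ∧
      (evalA u * evalA v) * x = (evalA u * x) * evalA v

/-- The set `P(x,y,z)`. -/
def Pset {A : Type*} [Mul A] (x y z : A) : Set A :=
  {(x*z)*y, (z*x)*y, (y*z)*x, (z*y)*x, x*(z*y), x*(y*z), y*(x*z), y*(z*x),
    x*y, y*x, x*z, z*x, y*z, z*y, x, y, z}

/-- The set `Q_l(x,y,z)`. -/
def Qlset {A : Type*} [Mul A] (x y z : A) : Set A :=
  {x*(z*y), x*(y*z), y*(x*z), y*(z*x), x*y, y*x, x*z, z*x, y*z, z*y, x, y, z}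

/-- The set `Q_r(x,y,z)`. -/
def Qrset {A : Type*} [Mul A] (x y z : A) : Set A :=
  {(x*z)*y, (z*x)*y, (y*z)*x, (z*y)*x, x*y, y*x, x*z, z*x, y*z, z*y, x, y, z}

/-- `A` is a mixing algebra. -/
def IsMixingAlg (F A : Type*) [Field F] [NonUnitalNonAssocRing A] [Module F A] : Prop :=
  ∀ x y z : A, (x*y)*z ∈ Submodule.span F (Pset x y z) ∧
    z*(x*y) ∈ Submodule.span F (Pset x y z)

/-- `A` is a sliding algebra. -/
def IsSlidingAlg (F A : Type*) [Field F] [NonUnitalNonAssocRing A] [Module F A] : Prop :=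
  (∀ x y z : A, z*(x*y) ∈ Submodule.span F (Qrset x y z)) ∨
  (∀ x y z : A, (x*y)*z ∈ Submodule.span F (Qlset x y z))


section Statement
variable {F A : Type*} [Field F] [NonUnitalNonAssocRing A] [Module F A]
  [SMulCommClass F A A] [IsScalarTower F A A]

lemma leafList_mul {α : Type*} (u v : FreeMagma α) :
    leafList (u * v) = leafList u ++ leafList v := rfl

lemma wlen_mul {α : Type*} (u v : FreeMagma α) : wlen (u * v) = wlen u + wlen v := by
  simp [wlen, leafList_mul]

lemma wlen_pos {α : Type*} : ∀ w : FreeMagma α, 1 ≤ wlen w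
  | .of _ => by simp [wlen, leafList]
  | .mul u v => by
      show 1 ≤ wlen (u * v)
      rw [wlen_mul]; have := wlen_pos u; omega

lemma evalA_mul (u v : FreeMagma A) : evalA (u * v) = evalA u * evalA v :=
  map_mul (FreeMagma.lift (id : A → A)) u v

lemma Lspan_mono (S : Set A) {i j : ℕ} (hij : i ≤ j) : Lspan F S i ≤ Lspan F S j :=
  Submodule.span_mono fun _ ⟨w, h1, h2, h3⟩ => ⟨w, h1, h2.trans hij, h3⟩

lemma mem_Lspan_of_word {S : Set A} {w : FreeMagma A} (hw : HasLeavesIn S w) {i : ℕ}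
    (hl : wlen w ≤ i) : evalA w ∈ Lspan F S i :=
  Submodule.subset_span ⟨w, hw, hl, rfl⟩

lemma mul_mem_Lspan_left {S : Set A} {i j : ℕ} {x : A} (hx : x ∈ Lspan F S i)
    {v : FreeMagma A} (hv : HasLeavesIn S v) (hvl : wlen v ≤ j) :
    x * evalA v ∈ Lspan F S (i + j) := by
  have hmap : x * evalA v ∈ Submodule.map (LinearMap.mulRight F (evalA v)) (Lspan F S i) :=
    ⟨x, hx, rfl⟩
  refine (?_ : Submodule.map (LinearMap.mulRight F (evalA v)) (Lspan F S i) ≤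
      Lspan F S (i + j)) hmap
  rw [Lspan, Submodule.map_span, Submodule.span_le]
  rintro _ ⟨_, ⟨u, hu, hul, rfl⟩, rfl⟩
  show evalA u * evalA v ∈ Lspan F S (i + j)
  rw [← evalA_mul]
  refine mem_Lspan_of_word ?_ ?_
  · intro a ha
    rw [leafList_mul, List.mem_append] at ha
    exact ha.elim (hu a) (hv a)
  · rw [wlen_mul]; omega

lemma mul_mem_Lspan_right {S : Set A} {i j : ℕ} {y : A} (hy : y ∈ Lspan F S j)
    {u : FreeMagma A} (hu : HasLeavesIn S u) (hul : wlen u ≤ i) :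
    evalA u * y ∈ Lspan F S (i + j) := by
  have hmap : evalA u * y ∈ Submodule.map (LinearMap.mulLeft F (evalA u)) (Lspan F S j) :=
    ⟨y, hy, rfl⟩
  refine (?_ : Submodule.map (LinearMap.mulLeft F (evalA u)) (Lspan F S j) ≤
      Lspan F S (i + j)) hmap
  rw [Lspan, Submodule.map_span, Submodule.span_le]
  rintro _ ⟨_, ⟨v, hv, hvl, rfl⟩, rfl⟩
  show evalA u * evalA v ∈ Lspan F S (i + j)
  rw [← evalA_mul]
  refine mem_Lspan_of_word ?_ ?_
  · intro a ha
    rw [leafList_mul, List.mem_append] at ha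
    exact ha.elim (hu a) (hv a)
  · rw [wlen_mul]; omega

/-- If some word in `S` of length exactly `a` is not in `L_{a-1}`, then the value `a`
occurs in the characteristic sequence. -/
lemma exists_index_of_word [FiniteDimensional F A] {S : Set A} {d : ℕ} {m : Fin d → ℕ}
    (hm : IsCharSeq F S m) {a : ℕ} (ha : 1 ≤ a) {w : FreeMagma A}
    (hw : HasLeavesIn S w) (hwl : wlen w = a) (hnot : evalA w ∉ Lspan F S (a - 1)) :
    ∃ i : Fin d, m i = a := by
  have hle : Lspan F S (a - 1) ≤ Lspan F S a := Lspan_mono S (by omega)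
  have hmem : evalA w ∈ Lspan F S a := mem_Lspan_of_word hw (le_of_eq hwl)
  have hlt : Lspan F S (a - 1) < Lspan F S a :=
    lt_of_le_of_ne hle (fun he => hnot (he ▸ hmem))
  have hfin : Module.finrank F (Lspan F S (a - 1)) < Module.finrank F (Lspan F S a) :=
    Submodule.finrank_lt_finrank_of_lt hlt
  have hcard := hm.2.2 a ha
  have hpos : 0 < (Finset.univ.filter fun j => m j = a).card := by omega
  obtain ⟨i, hi⟩ := Finset.card_pos.mp hpos
  exact ⟨i, (Finset.mem_filter.mp hi).2⟩

/- STATEMENT 6 -/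
theorem stmt6 [FiniteDimensional F A]
    (n : ℕ) (hn : Module.finrank F A = n) (hn2 : 2 < n)
    (S : Set A) (hS : Generates F S)
    (m : Fin n → ℕ) (hm : IsCharSeq F S m) :
    ∀ h : Fin n, 2 ≤ m h →
      ∃ t₁ t₂ : Fin n, t₁ ≤ t₂ ∧ t₂ < h ∧ 0 < m t₁ ∧ 0 < m t₂ ∧ m h = m t₁ + m t₂ := by
  intro h hh
  set t := m h with ht
  -- dim L_t > dim L_{t-1}
  have hcard := hm.2.2 t (by omega)
  have hpos : 0 < (Finset.univ.filter fun j => m j = t).card :=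
    Finset.card_pos.mpr ⟨h, Finset.mem_filter.mpr ⟨Finset.mem_univ _, rfl⟩⟩
  have hfin : Module.finrank F (Lspan F S (t - 1)) < Module.finrank F (Lspan F S t) := by
    omega
  -- a word of length exactly t not in L_{t-1}
  have hword : ∃ w : FreeMagma A, HasLeavesIn S w ∧ wlen w = t ∧
      evalA w ∉ Lspan F S (t - 1) := by
    by_contra hcon
    push_neg at hcon
    have hle : Lspan F S t ≤ Lspan F S (t - 1) := by
      rw [Lspan, Submodule.span_le]
      rintro _ ⟨w, hw, hwl, rfl⟩
      rcases eq_or_lt_of_le hwl with heq | hlt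
      · exact hcon w hw heq
      · exact mem_Lspan_of_word hw (by omega)
    have := Submodule.finrank_mono (R := F) hle
    omega
  obtain ⟨w, hw, hwl, hwn⟩ := hword
  -- t ≥ 2 so w is a product
  obtain ⟨u, v, rfl⟩ : ∃ u v : FreeMagma A, w = u * v := by
    cases w with
    | of a => exfalso; simp [wlen, leafList] at hwl; omega
    | mul u v => exact ⟨u, v, rfl⟩
  have hu : HasLeavesIn S u := fun a ha => hw a (by rw [leafList_mul]; exact List.mem_append_left _ ha)
  have hv : HasLeavesIn S v := fun a ha => hw a (by rw [leafList_mul]; exact List.mem_append_right _ ha)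
  set a := wlen u with hadef
  set b := wlen v with hbdef
  have hab : a + b = t := by rw [← hwl, wlen_mul]
  have ha1 : 1 ≤ a := wlen_pos u
  have hb1 : 1 ≤ b := wlen_pos v
  -- evalA u ∉ L_{a-1}
  have hun : evalA u ∉ Lspan F S (a - 1) := by
    intro hmem
    have := mul_mem_Lspan_left (F := F) hmem hv (le_refl b)
    rw [← evalA_mul] at this
    exact hwn (Lspan_mono S (by omega) this)
  have hvn : evalA v ∉ Lspan F S (b - 1) := by
    intro hmem
    have := mul_mem_Lspan_right (F := F) hmem hu (le_refl a)
    rw [← evalA_mul] at this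
    exact hwn (Lspan_mono S (by omega) this)
  obtain ⟨i, hia⟩ := exists_index_of_word hm ha1 hu rfl hun
  obtain ⟨j, hjb⟩ := exists_index_of_word hm hb1 hv rfl hvn
  -- indices are before h
  have hih : i < h := by
    by_contra hc
    push_neg at hc
    have := hm.1 hc
    omega
  have hjh : j < h := by
    by_contra hc
    push_neg at hc
    have := hm.1 hc
    omega
  rcases le_total i j with hij | hij
  · exact ⟨i, j, hij, hjh, by omega, by omega, by omega⟩
  · exact ⟨j, i, hij, hih, by omega, by omega, by omega⟩

end Statement

end P
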